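/- Let X be a compact Hausdorff space, d ≥ 2 and n ∈ ℕ. The set of continuous maps f : X → (M_d)_sa^{n+1} such that for every x ∈ X the tuple f(x) generates M_d as a C*-algebra is an open subset of the space C(X, (M_d)_sa^{n+1}) of all continuous maps, with the topology of uniform convergence. -/

import Mathlib

def CStarGenerates (A : Type*) [NonUnitalNonAssocSemiring A] [Module ℂ A] [Star A]
    [TopologicalSpace A] (s : Set A) : Prop :=
  ∀ S : NonUnitalStarSubalgebra ℂ A, IsClosed (S : Set A) → s ⊆ S → ∀ x : A, x ∈ S

lemma listProdMem {M : Type*} [Monoid M] (P : M → Prop)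
    (hP : ∀ x y, P x → P y → P (x * y)) :
    ∀ l : List M, l ≠ [] → (∀ y ∈ l, P y) → P l.prod := by
  intro l
  induction l with
  | nil => simp
  | cons y t ih =>
    intro _ hm
    cases t with
    | nil => simpa using hm y (by simp)
    | cons z t' =>
      rw [List.prod_cons]
      exact hP _ _ (hm y (by simp)) (ih (by simp) fun w hw => hm w (by simp [hw]))

lemma existsListOfMemClosure {M : Type*} [Monoid M] {s : Set M} {x : M}
    (hx : x ∈ Subsemigroup.closure s) :
    ∃ l : List M, l ≠ [] ∧ (∀ y ∈ l, y ∈ s) ∧ l.prod = x := by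
  induction hx using Subsemigroup.closure_induction with
  | mem x hx => exact ⟨[x], by simp, by simpa, by simp⟩
  | mul x y hx hy ihx ihy =>
    obtain ⟨l1, h1, h1s, h1p⟩ := ihx
    obtain ⟨l2, h2, h2s, h2p⟩ := ihy
    refine ⟨l1 ++ l2, by simp [h1], ?_, by rw [List.prod_append, h1p, h2p]⟩
    intro y hy
    rcases List.mem_append.mp hy with h | h
    · exact h1s y h
    · exact h2s y h

abbrev Md (d : ℕ) := Matrix (Fin d) (Fin d) ℂ

lemma continuous_word (d n : ℕ) (L : List (Fin (n + 1))) :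
    Continuous fun b : Fin (n + 1) → selfAdjoint (Md d) =>
      (L.map fun j => ((b j : Md d))).prod := by
  induction L with
  | nil => simpa using continuous_const
  | cons j t ih =>
    simp only [List.map_cons, List.prod_cons]
    exact (continuous_subtype_val.comp (continuous_apply j)).mul ih

lemma isOpen_generating (d n : ℕ) :
    IsOpen {b : Fin (n + 1) → selfAdjoint (Md d) |
      CStarGenerates (Md d) (Set.range fun j => ((b j : Md d)))} := by
  rw [isOpen_iff_mem_nhds]
  intro a ha
  set m := Module.finrank ℂ (Md d) with hm
  set B : Module.Basis (Fin m) ℂ (Md d) := Module.finBasis ℂ (Md d) with hB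
  -- the adjoin is closed and contains the range, so it is everything
  set s : Set (Md d) := Set.range fun j => ((a j : Md d)) with hs
  have hadj : (NonUnitalStarAlgebra.adjoin ℂ s : Set (Md d)) = Set.univ := by
    apply Set.eq_univ_of_forall
    intro x
    exact ha (NonUnitalStarAlgebra.adjoin ℂ s)
      (Submodule.closed_of_finiteDimensional
        (NonUnitalStarAlgebra.adjoin ℂ s).toSubmodule)
      (NonUnitalStarAlgebra.subset_adjoin ℂ s) x
  have hspan : Submodule.span ℂ
      ((Subsemigroup.closure (s ∪ star s) : Subsemigroup (Md d)) : Set (Md d)) = ⊤ := by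
    rw [← NonUnitalStarAlgebra.adjoin_eq_span]
    ext x
    simp only [Submodule.mem_top, iff_true]
    have := hadj ▸ Set.mem_univ x
    exact this
  -- extract an independent family of size m inside the closure
  obtain ⟨t, hts, htspan, htindep⟩ := exists_linearIndependent ℂ
    ((Subsemigroup.closure (s ∪ star s) : Subsemigroup (Md d)) : Set (Md d))
  rw [hspan] at htspan
  set Bt : Module.Basis t ℂ (Md d) :=
    Module.Basis.mk htindep (by rw [Subtype.range_val]; exact htspan.ge) with hBt
  have htfin : t.Finite := htindep.setFinite
  have : Fintype t := htfin.fintype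
  have hcard : Fintype.card t = m := by
    rw [hm, Module.finrank_eq_card_basis Bt]
  have e : t ≃ Fin m := Fintype.equivFinOfCardEq hcard
  set C : Module.Basis (Fin m) ℂ (Md d) := Bt.reindex e with hC
  have hCmem : ∀ i, (C i : Md d) ∈ Subsemigroup.closure (s ∪ star s) := by
    intro i
    have : C i = ((e.symm i : t) : Md d) := by
      rw [hC, Module.Basis.reindex_apply, hBt, Module.Basis.mk_apply]
    rw [this]
    exact hts (e.symm i).2
  -- choose index lists for each basis vector
  have hlist : ∀ i : Fin m, ∃ L : List (Fin (n + 1)), L ≠ [] ∧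
      (L.map fun j => ((a j : Md d))).prod = C i := by
    intro i
    obtain ⟨l, hl, hls, hlp⟩ := existsListOfMemClosure (hCmem i)
    have : ∀ y ∈ l, ∃ j : Fin (n + 1), ((a j : Md d)) = y := by
      intro y hy
      rcases hls y hy with h | h
      · exact h
      · rw [Set.mem_star] at h
        obtain ⟨j, hj⟩ := h
        have hj' : ((a j : Md d)) = star y := hj
        exact ⟨j, by rw [← (a j).prop, hj', star_star]⟩
    choose F hF using this
    refine ⟨l.attach.map fun y => F y.1 y.2, by simpa using hl, ?_⟩
    rw [← hlp, List.map_map]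
    conv_rhs => rw [← List.attach_map_subtype_val l]
    refine congrArg List.prod ?_
    apply List.map_congr_left
    intro y _
    exact hF y.1 y.2
  choose L hLne hLprod using hlist
  -- the determinant function
  have hdetcont : Continuous fun b : Fin (n + 1) → selfAdjoint (Md d) =>
      B.det fun i => (((L i).map fun j => ((b j : Md d))).prod) := by
    have hM : Continuous fun b : Fin (n + 1) → selfAdjoint (Md d) =>
        (Matrix.of fun i j : Fin m =>
          B.repr ((((L j).map fun k => ((b k : Md d))).prod)) i) := by
      apply continuous_matrix
      intro i j
      have h1 : Continuous (B.coord i) := (B.coord i).continuous_of_finiteDimensional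
      have h2 := h1.comp (continuous_word d n (L j))
      simpa [Module.Basis.coord_apply, Function.comp_def] using h2
    have hfun : (fun b : Fin (n + 1) → selfAdjoint (Md d) =>
        B.det fun i => (((L i).map fun j => ((b j : Md d))).prod)) =
        fun b => (Matrix.of fun i j : Fin m =>
          B.repr ((((L j).map fun k => ((b k : Md d))).prod)) i).det := by
      funext b
      rw [Module.Basis.det_apply]
      congr 1
    rw [hfun]
    exact hM.matrix_det
  have hdet_ne : B.det (fun i => (((L i).map fun j => ((a j : Md d))).prod)) ≠ 0 := by
    have : (fun i => (((L i).map fun j => ((a j : Md d))).prod)) = fun i => C i := by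
      funext i; exact hLprod i
    rw [this]
    exact (B.isUnit_det C).ne_zero
  -- the open neighborhood
  have hopen : IsOpen {b : Fin (n + 1) → selfAdjoint (Md d) |
      B.det (fun i => (((L i).map fun j => ((b j : Md d))).prod)) ≠ 0} :=
    isOpen_compl_iff.mpr (isClosed_singleton.preimage hdetcont)
  refine Filter.mem_of_superset (hopen.mem_nhds hdet_ne) ?_
  intro b hb
  intro S hScl hSsub x
  -- the words at b lie in S
  have hword : ∀ i : Fin m, (((L i).map fun j => ((b j : Md d))).prod) ∈ S := by
    intro i
    apply listProdMem (· ∈ S) (fun x y hx hy => S.mul_mem hx hy)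
    · simpa using hLne i
    · intro y hy
      simp only [List.mem_map] at hy
      obtain ⟨j, _, rfl⟩ := hy
      exact hSsub ⟨j, rfl⟩
  -- they are independent hence span
  have hindep : LinearIndependent ℂ (fun i => (((L i).map fun j => ((b j : Md d))).prod)) ∧
      Submodule.span ℂ (Set.range fun i => (((L i).map fun j => ((b j : Md d))).prod)) = ⊤ :=
    (Module.Basis.is_basis_iff_det B).mpr (isUnit_iff_ne_zero.mpr hb)
  have : Submodule.span ℂ (Set.range fun i => (((L i).map fun j => ((b j : Md d))).prod))
      ≤ S.toSubmodule := by
    rw [Submodule.span_le]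
    rintro y ⟨i, rfl⟩
    exact hword i
  rw [hindep.2] at this
  exact this (Submodule.mem_top)

/-- for a compact Hausdorff space `X` and `d ≥ 2`, the set of continuous maps
from `X` to the `(n+1)`-tuples of self-adjoint `d × d` matrices whose value at every point
generates `M_d` as a C*-algebra is open in `C(X, (M_d)_sa^{n+1})` (with the topology of
uniform convergence, i.e. the compact-open topology). -/
theorem stmt17 (X : Type*) [TopologicalSpace X] [CompactSpace X] [T2Space X]
    (d n : ℕ) (hd : 2 ≤ d) :
    IsOpen {f : C(X, Fin (n + 1) → selfAdjoint (Matrix (Fin d) (Fin d) ℂ)) |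
      ∀ x : X, CStarGenerates (Matrix (Fin d) (Fin d) ℂ)
        (Set.range fun j => ((f x j : Matrix (Fin d) (Fin d) ℂ)))} := by
  have := ContinuousMap.isOpen_setOf_mapsTo (isCompact_univ (X := X)) (isOpen_generating d n)
  convert this using 1
  ext f
  simp [Set.MapsTo]
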